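/- arXiv:2304.00490 — 4 statements merged into one kernel-verified Lean document; each statement's English description precedes it below -/
import Mathlib

section
/- Let $\sigma_1:\mathbb{R}\to\mathbb{R}$ be Lipschitz with constant $L$, let $A:\ell^q\to\ell^q$ be a bounded linear operator with $L\cdot\|A\|_{op}<1$, let $C:\mathbb{R}^d\to\ell^q$ be bounded linear, ${\bf B}\in\ell^q$, and let $D_d\subset\mathbb{R}^d$ be compact. Then for each input sequence ${\bf z}\in (D_d)^{\mathbb{Z}_-}$ there exists a unique bounded sequence $(\mathbf{x}_t)_{t\in\mathbb{Z}_-}$ in $\ell^q$ (i.e. $\sup_{t}\|\mathbf{x}_t\|_q<\infty$) satisfying $\mathbf{x}_t=\sigma_1(A\mathbf{x}_{t-1}+C{\bf z}_t+{\bf B})$ for all $t\in\mathbb{Z}_-$, where $\sigma_1$ is applied componentwise. -/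
open scoped ENNReal NNReal BoundedContinuousFunction

section aux

variable {p : ℝ≥0∞}

lemma memℓp_of_norm_le {f g : ℕ → ℝ} (hg : Memℓp g p) (h : ∀ i, ‖f i‖ ≤ ‖g i‖) :
    Memℓp f p := by
  rcases p.trichotomy with (rfl | rfl | hp)
  · refine memℓp_zero (hg.finite_dsupport.subset ?_)
    intro i hi
    simp only [Set.mem_setOf_eq] at hi ⊢
    intro hgi
    apply hi
    have hfi : ‖f i‖ = 0 := le_antisymm (by simpa [hgi] using h i) (norm_nonneg _)
    simpa using hfi
  · refine memℓp_infty ?_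
    obtain ⟨M, hM⟩ := hg.bddAbove
    refine ⟨M, ?_⟩
    rintro - ⟨i, rfl⟩
    exact (h i).trans (hM ⟨i, rfl⟩)
  · refine memℓp_gen ?_
    refine Summable.of_nonneg_of_le (fun i => Real.rpow_nonneg (norm_nonneg _) _)
      (fun i => Real.rpow_le_rpow (norm_nonneg _) (h i) hp.le) (hg.summable hp)

lemma lp_norm_mono [Fact (1 ≤ p)] {f g : lp (fun _ : ℕ => ℝ) p}
    (h : ∀ i, ‖(f : ∀ _ : ℕ, ℝ) i‖ ≤ ‖(g : ∀ _ : ℕ, ℝ) i‖) : ‖f‖ ≤ ‖g‖ := by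
  have hp0 : p ≠ 0 := (zero_lt_one.trans_le (Fact.out : 1 ≤ p)).ne'
  rcases p.trichotomy with (rfl | rfl | hp)
  · exact absurd rfl hp0
  · exact lp.norm_le_of_forall_le (norm_nonneg g)
      (fun i => (h i).trans (lp.norm_apply_le_norm (by simp) g i))
  · refine lp.norm_le_of_forall_sum_le hp (norm_nonneg g) (fun s => ?_)
    calc ∑ i ∈ s, ‖(f : ∀ _ : ℕ, ℝ) i‖ ^ p.toReal
        ≤ ∑ i ∈ s, ‖(g : ∀ _ : ℕ, ℝ) i‖ ^ p.toReal := by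
          exact Finset.sum_le_sum fun i _ =>
            Real.rpow_le_rpow (norm_nonneg _) (h i) hp.le
      _ ≤ ‖g‖ ^ p.toReal := lp.sum_rpow_le_norm_rpow hp g s

end aux

noncomputable abbrev ESp (q : ℝ≥0∞) : Type := lp (fun _ : ℕ => ℝ) q

/-- **Echo state property for contractive infinite-dimensional systems.**
Time is indexed in reversed order: `x t` is the state at time `-t` and `z t` the
input at time `-t`, so the recursion `x_t = σ₁(A x_{t-1} + C z_t + B)` reads
`x t = σ₁(A (x (t+1)) + C (z t) + B)` (componentwise application of `σ₁`). -/
theorem unique_bounded_solution_of_contractive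
    (q : ℝ≥0∞) [Fact (1 ≤ q)] (d : ℕ)
    (σ1 : ℝ → ℝ) (L : ℝ≥0) (hσLip : LipschitzWith L σ1) (hσ0 : σ1 0 = 0)
    (A : lp (fun _ : ℕ => ℝ) q →L[ℝ] lp (fun _ : ℕ => ℝ) q)
    (hA : (L : ℝ) * ‖A‖ < 1)
    (C : EuclideanSpace ℝ (Fin d) →L[ℝ] lp (fun _ : ℕ => ℝ) q)
    (B : lp (fun _ : ℕ => ℝ) q)
    (D : Set (EuclideanSpace ℝ (Fin d))) (hD : IsCompact D)
    (z : ℕ → EuclideanSpace ℝ (Fin d)) (hz : ∀ t, z t ∈ D) :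
    ∃! x : ℕ → lp (fun _ : ℕ => ℝ) q,
      (∃ M : ℝ, ∀ t, ‖x t‖ ≤ M) ∧
      ∀ t i, (x t : ∀ _ : ℕ, ℝ) i
        = σ1 ((A (x (t + 1)) + C (z t) + B : lp (fun _ : ℕ => ℝ) q) i) := by
  -- componentwise σ1 maps lp to lp
  have hmem : ∀ u : ESp q, Memℓp (fun i => σ1 ((u : ∀ _ : ℕ, ℝ) i)) q := by
    intro u
    refine memℓp_of_norm_le (p := q) (g := fun i => (L : ℝ) * (u : ∀ _ : ℕ, ℝ) i)
      ((lp.memℓp u).const_smul (L : ℝ)) (fun i => ?_)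
    have := hσLip.dist_le_mul ((u : ∀ _ : ℕ, ℝ) i) 0
    simpa [hσ0, Real.dist_eq, abs_mul, abs_of_nonneg L.coe_nonneg] using this
  set Smap : ESp q → ESp q := fun u => ⟨fun i => σ1 ((u : ∀ _ : ℕ, ℝ) i), hmem u⟩ with hSmap
  have hSapply : ∀ (u : ESp q) (i : ℕ), (Smap u : ∀ _ : ℕ, ℝ) i = σ1 ((u : ∀ _ : ℕ, ℝ) i) := by
    intro u i; rfl
  have hSlip : ∀ u v : ESp q, ‖Smap u - Smap v‖ ≤ (L : ℝ) * ‖u - v‖ := by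
    intro u v
    have h1 : ‖(L : ℝ) • (u - v)‖ = (L : ℝ) * ‖u - v‖ := by
      rw [norm_smul]; simp [abs_of_nonneg L.coe_nonneg]
    rw [← h1]
    refine lp_norm_mono (fun i => ?_)
    have h2 : ((Smap u - Smap v : ESp q) : ∀ _ : ℕ, ℝ) i
        = σ1 ((u : ∀ _ : ℕ, ℝ) i) - σ1 ((v : ∀ _ : ℕ, ℝ) i) := by
      rw [lp.coeFn_sub]; rfl
    have h3 : (((L : ℝ) • (u - v) : ESp q) : ∀ _ : ℕ, ℝ) i
        = (L : ℝ) * ((u : ∀ _ : ℕ, ℝ) i - (v : ∀ _ : ℕ, ℝ) i) := by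
      rw [lp.coeFn_smul, lp.coeFn_sub]; rfl
    rw [h2, h3]
    have := hσLip.dist_le_mul ((u : ∀ _ : ℕ, ℝ) i) ((v : ∀ _ : ℕ, ℝ) i)
    simp only [Real.dist_eq] at this
    simpa [Real.norm_eq_abs, abs_mul, abs_of_nonneg L.coe_nonneg] using this
  -- inputs are bounded
  obtain ⟨R, hR⟩ : ∃ R : ℝ, ∀ t, ‖C (z t) + B‖ ≤ R := by
    obtain ⟨r, hr⟩ := hD.isBounded.subset_ball 0
    exact ⟨‖C‖ * r + ‖B‖, fun t => by
      have := (C.le_opNorm (z t))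
      have hzr : ‖z t‖ ≤ r := le_of_lt (by simpa using mem_ball_zero_iff.mp (hr (hz t)))
      calc ‖C (z t) + B‖ ≤ ‖C (z t)‖ + ‖B‖ := norm_add_le _ _
        _ ≤ ‖C‖ * r + ‖B‖ := by
            refine add_le_add ?_ le_rfl
            exact (C.le_opNorm (z t)).trans (by
              exact mul_le_mul_of_nonneg_left hzr (norm_nonneg C))⟩
  -- set up the contraction on bounded functions ℕ →ᵇ ESp q
  let T : (ℕ →ᵇ ESp q) → (ℕ →ᵇ ESp q) := fun x =>
    BoundedContinuousFunction.ofNormedAddCommGroup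
      (fun t => Smap (A (x (t + 1)) + C (z t) + B))
      (continuous_of_discreteTopology)
      ((L : ℝ) * (‖A‖ * ‖x‖ + R))
      (by
        intro t
        have h0 : Smap 0 = 0 := by
          apply Subtype.ext
          funext i
          simpa [hSapply] using hσ0
        have h1 : ‖Smap (A (x (t + 1)) + C (z t) + B)‖
            ≤ (L : ℝ) * ‖A (x (t + 1)) + C (z t) + B‖ := by
          have := hSlip (A (x (t + 1)) + C (z t) + B) 0
          simpa [h0] using this
        refine h1.trans ?_
        refine mul_le_mul_of_nonneg_left ?_ L.coe_nonneg
        calc ‖A (x (t + 1)) + C (z t) + B‖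
            ≤ ‖A (x (t + 1))‖ + ‖C (z t) + B‖ := by
              rw [add_assoc]; exact norm_add_le _ _
          _ ≤ ‖A‖ * ‖x‖ + R := add_le_add
              ((A.le_opNorm _).trans (mul_le_mul_of_nonneg_left
                (x.norm_coe_le_norm _) (norm_nonneg A))) (hR t))
  have hTapply : ∀ (x : ℕ →ᵇ ESp q) (t : ℕ), T x t = Smap (A (x (t + 1)) + C (z t) + B) := by
    intro x t; rfl
  set K : ℝ≥0 := L * ‖A‖₊ with hK
  have hKlt : K < 1 := by
    rw [← NNReal.coe_lt_coe]
    push_cast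
    exact (show ((L * ‖A‖₊ : ℝ≥0) : ℝ) < 1 by rw [NNReal.coe_mul, coe_nnnorm]; exact hA)
  have hTcontr : ContractingWith K T := by
    refine ⟨hKlt, LipschitzWith.of_dist_le_mul (fun x y => ?_)⟩
    rw [BoundedContinuousFunction.dist_le (by positivity)]
    intro t
    rw [dist_eq_norm, hTapply, hTapply]
    calc ‖Smap (A (x (t + 1)) + C (z t) + B) - Smap (A (y (t + 1)) + C (z t) + B)‖
        ≤ (L : ℝ) * ‖(A (x (t + 1)) + C (z t) + B) - (A (y (t + 1)) + C (z t) + B)‖ :=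
          hSlip _ _
      _ = (L : ℝ) * ‖A (x (t + 1)) - A (y (t + 1))‖ := by
          rw [add_assoc, add_assoc, add_sub_add_right_eq_sub]
      _ ≤ (L : ℝ) * (‖A‖ * ‖x (t + 1) - y (t + 1)‖) := by
          refine mul_le_mul_of_nonneg_left ?_ L.coe_nonneg
          rw [← map_sub]; exact A.le_opNorm _
      _ ≤ (L : ℝ) * (‖A‖ * dist x y) := by
          refine mul_le_mul_of_nonneg_left (mul_le_mul_of_nonneg_left ?_ (norm_nonneg A))
            L.coe_nonneg
          rw [← dist_eq_norm]
          exact BoundedContinuousFunction.dist_coe_le_dist _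
      _ = (K : ℝ) * dist x y := by
          push_cast [hK]
          simp [coe_nnnorm, mul_assoc]
  -- fixed point
  let x₀ : ℕ →ᵇ ESp q := hTcontr.fixedPoint T
  have hfix : T x₀ = x₀ := hTcontr.fixedPoint_isFixedPt
  refine ⟨⇑x₀, ⟨⟨‖x₀‖, fun t => x₀.norm_coe_le_norm t⟩, ?_⟩, ?_⟩
  · intro t i
    have h : x₀ t = Smap (A (x₀ (t + 1)) + C (z t) + B) :=
      (DFunLike.congr_fun hfix t).symm.trans (hTapply x₀ t)
    rw [h, hSapply]
  · rintro y ⟨⟨M, hM⟩, hy⟩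
    -- package y as a bounded continuous function
    let yb : ℕ →ᵇ ESp q := BoundedContinuousFunction.ofNormedAddCommGroup y
      continuous_of_discreteTopology M hM
    have hyfix : T yb = yb := by
      ext t i
      rw [hTapply, hSapply]
      exact (hy t i).symm
    have : yb = x₀ := hTcontr.fixedPoint_unique hyfix
    funext t
    calc y t = yb t := rfl
      _ = x₀ t := by rw [this]
end

section
/- Let $\lambda\in(0,1)$, $d\in\mathbb{N}$, and consider the shift system on $\ell^q$ ($q\in[1,\infty]$) given by $(A\mathbf{x})_i=\lambda x_{i-d}\mathbbm{1}_{\{i>d\}}$, $(C{\bf z})_i=z_i\mathbbm{1}_{\{i\leq d\}}$, ${\bf B}=0$. Then for every input ${\bf z}\in(D_d)^{\mathbb{Z}_-}$ with $D_d$ bounded, the sequence defined by $x_{t,(k-1)d+j}=\lambda^{k-1}z_{t-k+1,j}$ for $k\in\mathbb{N}$, $j=1,\ldots,d$, is the unique bounded-in-$\ell^q$ solution of $\mathbf{x}_t=A\mathbf{x}_{t-1}+C{\bf z}_t$ for $t\in\mathbb{Z}_-$. -/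
open scoped ENNReal NNReal

private lemma summable_pow_div {r : ℝ} (h0 : 0 ≤ r) (h1 : r < 1) {d : ℕ} (hd : 0 < d) :
    Summable (fun i : ℕ => r ^ (i / d)) := by
  have : NeZero d := ⟨hd.ne'⟩
  have hg : Summable (fun p : ℕ × Fin d => r ^ p.1) := by
    rw [summable_prod_of_nonneg (fun p => pow_nonneg h0 _)]
    refine ⟨fun k => Summable.of_finite, ?_⟩
    simp only [tsum_fintype, Finset.sum_const, Finset.card_univ, Fintype.card_fin, nsmul_eq_mul]
    exact (summable_geometric_of_lt_one h0 h1).mul_left _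
  exact ((Nat.divModEquiv d).summable_iff).mpr hg

/-- Coordinates of the "rolling memory" state: with 0-based indexing, coordinate
`i = (k-1)d + (j-1)` (i.e. `k - 1 = i / d`, `j - 1 = i % d`) of the state at time
`-t` is `λ^{k-1} z_{t-k+1, j}`, which in reversed time indexing reads
`lam ^ (i / d) * z (t + i / d) (i % d)`. -/
noncomputable def rollingMemory (d : ℕ) (hd : 0 < d) (lam : ℝ)
    (z : ℕ → EuclideanSpace ℝ (Fin d)) (t : ℕ) : ℕ → ℝ :=
  fun i => lam ^ (i / d) * z (t + i / d) ⟨i % d, Nat.mod_lt i hd⟩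

/-- **The rolling-memory shift system has the echo state property.**  For
`λ ∈ (0,1)`, the system on `ℓ^q` with `(A x)_i = λ x_{i-d} 𝟙_{i > d}`,
`(C z)_i = z_i 𝟙_{i ≤ d}`, `B = 0` (here written coordinatewise, 0-based, and in
reversed time: `x t i = z t i` for `i < d` and `x t i = λ ⬝ x (t+1) (i-d)`
otherwise) has, for any input with values in a bounded set `D`, the sequence
`rollingMemory` as its unique solution that is bounded in `ℓ^q`. -/
theorem rollingMemory_unique_bounded_solution
    (q : ℝ≥0∞) [Fact (1 ≤ q)] (d : ℕ) (hd : 0 < d)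
    (lam : ℝ) (hlam0 : 0 < lam) (hlam1 : lam < 1)
    (D : Set (EuclideanSpace ℝ (Fin d))) (M : ℝ)
    (hD : ∀ u ∈ D, ∀ j, |u j| ≤ M)
    (z : ℕ → EuclideanSpace ℝ (Fin d)) (hz : ∀ t, z t ∈ D) :
    (∃! x : ℕ → lp (fun _ : ℕ => ℝ) q,
      (∃ M' : ℝ, ∀ t, ‖x t‖ ≤ M') ∧
      (∀ t i, (x t : ∀ _ : ℕ, ℝ) i =
        if h : i < d then z t ⟨i, h⟩ else lam * (x (t + 1) : ∀ _ : ℕ, ℝ) (i - d))) ∧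
    (∀ x : ℕ → lp (fun _ : ℕ => ℝ) q,
      (∃ M' : ℝ, ∀ t, ‖x t‖ ≤ M') →
      (∀ t i, (x t : ∀ _ : ℕ, ℝ) i =
        if h : i < d then z t ⟨i, h⟩ else lam * (x (t + 1) : ∀ _ : ℕ, ℝ) (i - d)) →
      ∀ t i, (x t : ∀ _ : ℕ, ℝ) i = rollingMemory d hd lam z t i) := by
  set f : ℕ → ℕ → ℝ := rollingMemory d hd lam z with hf
  have hM0 : 0 ≤ M := le_trans (abs_nonneg _) (hD (z 0) (hz 0) ⟨0, hd⟩)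
  -- pointwise bound
  have hfb : ∀ t i, ‖f t i‖ ≤ M * lam ^ (i / d) := by
    intro t i
    have h1 : ‖f t i‖ = lam ^ (i / d) * |z (t + i / d) ⟨i % d, Nat.mod_lt i hd⟩| := by
      rw [hf]
      simp only [rollingMemory, Real.norm_eq_abs, abs_mul, abs_pow, abs_of_pos hlam0]
    rw [h1, mul_comm M]
    exact mul_le_mul_of_nonneg_left (hD _ (hz _) _) (pow_nonneg hlam0.le _)
  -- the recursion
  have hrec : ∀ t i, f t i =
      if h : i < d then z t ⟨i, h⟩ else lam * f (t + 1) (i - d) := by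
    intro t i
    by_cases h : i < d
    · rw [dif_pos h, hf]
      simp only [rollingMemory, Nat.div_eq_of_lt h, pow_zero, one_mul, Nat.add_zero]
      exact congrArg (fun j => z t j) (Fin.ext (Nat.mod_eq_of_lt h))
    · rw [dif_neg h]
      push_neg at h
      have hdiv : i / d = (i - d) / d + 1 := Nat.div_eq_sub_div hd h
      have hfin : (⟨i % d, Nat.mod_lt i hd⟩ : Fin d)
          = ⟨(i - d) % d, Nat.mod_lt _ hd⟩ := Fin.ext (Nat.mod_eq_sub_mod h)
      rw [hf]
      simp only [rollingMemory]
      rw [hfin, hdiv, pow_succ]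
      have ht : t + ((i - d) / d + 1) = t + 1 + (i - d) / d := by omega
      rw [ht]
      ring
  -- membership in ℓ^q
  have hqne : q ≠ 0 := by
    have h1 : (1 : ℝ≥0∞) ≤ q := Fact.out
    intro h; rw [h] at h1; simp at h1
  have hkey : q ≠ ∞ → ∀ t i, ‖f t i‖ ^ q.toReal ≤
      M ^ q.toReal * (lam ^ q.toReal) ^ (i / d) := by
    intro hq t i
    have hp : 0 < q.toReal := ENNReal.toReal_pos hqne hq
    refine (Real.rpow_le_rpow (norm_nonneg _) (hfb t i) hp.le).trans_eq ?_
    rw [Real.mul_rpow hM0 (pow_nonneg hlam0.le _)]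
    congr 1
    rw [← Real.rpow_natCast lam (i / d), ← Real.rpow_mul hlam0.le,
      mul_comm ((i / d : ℕ) : ℝ) q.toReal, Real.rpow_mul hlam0.le,
      Real.rpow_natCast]
  have hmem : ∀ t, Memℓp (f t) q := by
    intro t
    rcases eq_or_ne q ∞ with hq | hq
    · subst hq
      apply memℓp_infty
      refine ⟨M, ?_⟩
      rintro - ⟨i, rfl⟩
      exact (hfb t i).trans (by
        nth_rewrite 2 [show M = M * 1 by ring]
        exact mul_le_mul_of_nonneg_left (pow_le_one₀ hlam0.le hlam1.le) hM0)
    · have hp : 0 < q.toReal := ENNReal.toReal_pos hqne hq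
      apply memℓp_gen
      refine Summable.of_nonneg_of_le
        (fun i => Real.rpow_nonneg (norm_nonneg _) _) (hkey hq t) ?_
      exact (summable_pow_div (Real.rpow_nonneg hlam0.le _)
        (Real.rpow_lt_one hlam0.le hlam1 hp) hd).mul_left _
  set X : ℕ → lp (fun _ : ℕ => ℝ) q := fun t => ⟨f t, hmem t⟩ with hX
  have hXcoe : ∀ t i, (X t : ∀ _ : ℕ, ℝ) i = f t i := fun _ _ => rfl
  -- uniform norm bound
  have hbdd : ∃ M' : ℝ, ∀ t, ‖X t‖ ≤ M' := by
    rcases eq_or_ne q ∞ with hq | hq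
    · subst hq
      refine ⟨M, fun t => lp.norm_le_of_forall_le hM0 fun i => ?_⟩
      refine (hfb t i).trans ?_
      nth_rewrite 2 [show M = M * 1 by ring]
      exact mul_le_mul_of_nonneg_left (pow_le_one₀ hlam0.le hlam1.le) hM0
    · have hp : 0 < q.toReal := ENNReal.toReal_pos hqne hq
      set g : ℕ → ℝ := fun i => M ^ q.toReal * (lam ^ q.toReal) ^ (i / d) with hg
      have hgsum : Summable g :=
        (summable_pow_div (Real.rpow_nonneg hlam0.le _)
          (Real.rpow_lt_one hlam0.le hlam1 hp) hd).mul_left _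
      have hgnn : ∀ i, 0 ≤ g i := fun i =>
        mul_nonneg (Real.rpow_nonneg hM0 _)
          (pow_nonneg (Real.rpow_nonneg hlam0.le _) _)
      set S : ℝ := ∑' i, g i with hS
      have hS0 : 0 ≤ S := tsum_nonneg hgnn
      refine ⟨S ^ q.toReal⁻¹, fun t => ?_⟩
      refine lp.norm_le_of_forall_sum_le hp (Real.rpow_nonneg hS0 _) fun s => ?_
      rw [Real.rpow_inv_rpow hS0 hp.ne']
      calc ∑ i ∈ s, ‖(X t : ∀ _ : ℕ, ℝ) i‖ ^ q.toReal ≤ ∑ i ∈ s, g i := by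
            exact Finset.sum_le_sum fun i _ => hkey hq t i
        _ ≤ S := Summable.sum_le_tsum s (fun i _ => hgnn i) hgsum
  -- uniqueness of solutions
  have huniq : ∀ x : ℕ → lp (fun _ : ℕ => ℝ) q,
      (∀ t i, (x t : ∀ _ : ℕ, ℝ) i =
        if h : i < d then z t ⟨i, h⟩ else lam * (x (t + 1) : ∀ _ : ℕ, ℝ) (i - d)) →
      ∀ i t, (x t : ∀ _ : ℕ, ℝ) i = f t i := by
    intro x hx i
    induction i using Nat.strong_induction_on with
    | _ i ih =>
      intro t
      rw [hx t i, hrec t i]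
      by_cases h : i < d
      · rw [dif_pos h, dif_pos h]
      · rw [dif_neg h, dif_neg h, ih (i - d) (by omega) (t + 1)]
  refine ⟨⟨X, ⟨hbdd, fun t i => hrec t i⟩, ?_⟩, fun x _ hx t i => huniq x hx i t⟩
  intro y ⟨_, hy⟩
  funext t
  apply Subtype.ext
  funext i
  exact huniq y hy i t
end

section
/- Let ${\bf h}\in\ell^p_-(\mathbb{R}^d)$ and $\mathcal{I}_d\subset\ell^q_-(D_d)$ where $p,q$ are Hölder conjugates. Then the convolutional functional $H({\bf z})=\sum_{i\in\mathbb{Z}_-}{\bf h}_i\cdot{\bf z}_i$ is well-defined (the series converges absolutely, bounded by $\|{\bf h}\|_p\|{\bf z}\|_q$ via Hölder's inequality) and belongs to the class $\mathcal{C}$ of recurrent generalized Barron functionals with $\sigma_1(x)=x$ and $\sigma_2(x)=x$. -/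
set_option maxHeartbeats 2000000
set_option synthInstance.maxHeartbeats 1000000

open scoped ENNReal NNReal
open MeasureTheory

/-- The class `𝒞` of recurrent generalized Barron functionals (reversed time
indexing: `z t` and `Xst z t` are the input and state at time `-t`). -/
def IsRecurrentBarron (p q : ℝ≥0∞) [Fact (1 ≤ p)] [Fact (1 ≤ q)]
    [MeasurableSpace (lp (fun _ : ℕ => ℝ) p)]
    (σ1 σ2 : ℝ → ℝ) (d : ℕ)
    (I : Set (ℕ → EuclideanSpace ℝ (Fin d)))
    (H : (ℕ → EuclideanSpace ℝ (Fin d)) → ℝ) : Prop :=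
  ∃ (μ : Measure (ℝ × lp (fun _ : ℕ => ℝ) p × EuclideanSpace ℝ (Fin d) × ℝ))
    (_ : IsProbabilityMeasure μ)
    (A : lp (fun _ : ℕ => ℝ) q →ₗ[ℝ] lp (fun _ : ℕ => ℝ) q)
    (C : EuclideanSpace ℝ (Fin d) →ₗ[ℝ] lp (fun _ : ℕ => ℝ) q)
    (B : lp (fun _ : ℕ => ℝ) q)
    (Xst : (ℕ → EuclideanSpace ℝ (Fin d)) → ℕ → lp (fun _ : ℕ => ℝ) q),
    Integrable (fun v => |v.1| * (‖v.2.1‖ + ‖v.2.2.1‖ + |v.2.2.2|)) μ ∧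
    (∀ z ∈ I,
      (∃ M : ℝ, ∀ t, ‖Xst z t‖ ≤ M) ∧
      (∀ t i, (Xst z t : ∀ _ : ℕ, ℝ) i
          = σ1 ((A (Xst z (t + 1)) + C (z t) + B : lp (fun _ : ℕ => ℝ) q) i)) ∧
      (∀ y : ℕ → lp (fun _ : ℕ => ℝ) q, (∃ M : ℝ, ∀ t, ‖y t‖ ≤ M) →
        (∀ t i, (y t : ∀ _ : ℕ, ℝ) i
            = σ1 ((A (y (t + 1)) + C (z t) + B : lp (fun _ : ℕ => ℝ) q) i)) →
        y = Xst z)) ∧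
    (∀ z ∈ I, H z =
      ∫ v, v.1 * σ2 ((∑' i, (v.2.1 : ∀ _ : ℕ, ℝ) i * (Xst z 1 : ∀ _ : ℕ, ℝ) i)
          + (∑ j, v.2.2.1 j * z 0 j) + v.2.2.2) ∂μ)

/-! ### Auxiliary definitions and lemmas -/

/-- The index equivalence `ℕ ≃ ℕ × Fin d` given by Euclidean division. -/
def convEquiv (d : ℕ) (hd : 0 < d) : ℕ ≃ ℕ × Fin d where
  toFun i := (i / d, ⟨i % d, Nat.mod_lt _ hd⟩)
  invFun kj := d * kj.1 + kj.2
  left_inv i := Nat.div_add_mod i d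
  right_inv := by
    rintro ⟨k, j⟩
    refine Prod.ext ?_ (Fin.ext ?_)
    · show (d * k + (j : ℕ)) / d = k
      rw [Nat.mul_add_div hd, Nat.div_eq_of_lt j.isLt, add_zero]
    · show (d * k + (j : ℕ)) % d = (j : ℕ)
      rw [Nat.mul_add_mod, Nat.mod_eq_of_lt j.isLt]

/-- Flattening of a `d`-dimensional sequence into a scalar sequence, starting at time `t`. -/
def convFlatten {d : ℕ} (hd : 0 < d) (w : ℕ → EuclideanSpace ℝ (Fin d)) (t : ℕ) : ℕ → ℝ :=
  fun i => w (t + i / d) ⟨i % d, Nat.mod_lt _ hd⟩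

lemma euclid_coord_le {d : ℕ} (x : EuclideanSpace ℝ (Fin d)) (j : Fin d) : |x j| ≤ ‖x‖ := by
  have h1 : |inner (𝕜 := ℝ) (EuclideanSpace.single j (1:ℝ)) x| ≤
      ‖EuclideanSpace.single j (1:ℝ)‖ * ‖x‖ := abs_real_inner_le_norm _ _
  simpa [EuclideanSpace.inner_single_left, EuclideanSpace.norm_single] using h1

lemma euclid_dot_le {d : ℕ} (x y : EuclideanSpace ℝ (Fin d)) :
    |∑ j, x j * y j| ≤ ‖x‖ * ‖y‖ := by
  have h2 : inner (𝕜 := ℝ) x y = ∑ j, x j * y j := by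
    simp [PiLp.inner_apply, RCLike.inner_apply, mul_comm]
  rw [← h2]; exact abs_real_inner_le_norm _ _

lemma summable_convFlatten_aux {d : ℕ} {w : ℕ → EuclideanSpace ℝ (Fin d)} {rt : ℝ}
    (hrt : 0 < rt) (t : ℕ) (hsum : Summable fun k : ℕ => ‖w (t + k)‖ ^ rt) :
    Summable fun kj : ℕ × Fin d => |w (t + kj.1) kj.2| ^ rt := by
  rw [summable_prod_of_nonneg (fun kj => Real.rpow_nonneg (abs_nonneg _) _)]
  refine ⟨fun k => Summable.of_finite, ?_⟩
  refine Summable.of_nonneg_of_le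
    (fun k => tsum_nonneg fun j => Real.rpow_nonneg (abs_nonneg _) _)
    (fun k => ?_) (hsum.mul_right (d:ℝ))
  rw [tsum_fintype]
  calc ∑ j, |w (t + k) j| ^ rt ≤ ∑ _j : Fin d, ‖w (t + k)‖ ^ rt := by
        refine Finset.sum_le_sum fun j _ => ?_
        exact Real.rpow_le_rpow (abs_nonneg _) (euclid_coord_le _ _) hrt.le
    _ = ‖w (t + k)‖ ^ rt * (d:ℝ) := by simp [Finset.sum_const, mul_comm]

lemma memℓp_convFlatten {d : ℕ} (hd : 0 < d) {r : ℝ≥0∞} {w : ℕ → EuclideanSpace ℝ (Fin d)}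
    (hw : Memℓp w r) (hr : 1 ≤ r) (t : ℕ) : Memℓp (convFlatten hd w t) r := by
  rcases eq_or_ne r ∞ with hri | hri
  · subst hri
    obtain ⟨M, hM⟩ := memℓp_infty_iff.1 hw
    refine memℓp_infty ⟨M, ?_⟩
    rintro x ⟨i, rfl⟩
    exact le_trans (by simpa [convFlatten] using euclid_coord_le (w (t + i / d)) _)
      (hM ⟨t + i / d, rfl⟩)
  · have hr0 : 0 < r.toReal := ENNReal.toReal_pos (by rintro rfl; simp at hr) hri
    apply memℓp_gen
    have hsum : Summable fun k : ℕ => ‖w (t + k)‖ ^ r.toReal :=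
      ((memℓp_gen_iff hr0).1 hw).comp_injective (add_right_injective t)
    have hF := summable_convFlatten_aux hr0 t hsum
    have := hF.comp_injective (convEquiv d hd).injective
    refine this.congr fun i => ?_
    simp [convFlatten, convEquiv, Real.norm_eq_abs, Function.comp]

lemma memℓp_convShift (d : ℕ) {r : ℝ≥0∞} (hr : 1 ≤ r) {x : ℕ → ℝ}
    (hx : Memℓp x r) : Memℓp (fun i => if d ≤ i then x (i - d) else 0) r := by
  rcases eq_or_ne r ∞ with hri | hri
  · subst hri
    obtain ⟨M, hM⟩ := memℓp_infty_iff.1 hx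
    refine memℓp_infty ⟨M, ?_⟩
    rintro y ⟨i, rfl⟩
    simp only
    split_ifs with hi
    · exact hM ⟨i - d, rfl⟩
    · simpa using le_trans (norm_nonneg (x 0)) (hM ⟨0, rfl⟩)
  · have hr0 : 0 < r.toReal := ENNReal.toReal_pos (by rintro rfl; simp at hr) hri
    apply memℓp_gen
    have hsum := (memℓp_gen_iff hr0).1 hx
    refine (summable_nat_add_iff d).1 ?_
    refine hsum.congr fun n => ?_
    simp [Nat.le_add_left]

/-- The shift linear map `A` on `lp`. -/
noncomputable def convShiftL (d : ℕ) (q : ℝ≥0∞) [Fact (1 ≤ q)] :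
    lp (fun _ : ℕ => ℝ) q →ₗ[ℝ] lp (fun _ : ℕ => ℝ) q where
  toFun x := ⟨fun i => if d ≤ i then x (i - d) else 0,
    memℓp_convShift d Fact.out (lp.memℓp x)⟩
  map_add' x y := by
    apply lp.ext
    funext i
    simp only [lp.coeFn_add, Pi.add_apply]
    split_ifs <;> simp [lp.coeFn_add]
  map_smul' c x := by
    apply lp.ext
    funext i
    simp only [lp.coeFn_smul, Pi.smul_apply, RingHom.id_apply, smul_eq_mul]
    split_ifs <;> simp [lp.coeFn_smul]

lemma memℓp_finsupport {d : ℕ} (r : ℝ≥0∞) (z : EuclideanSpace ℝ (Fin d)) :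
    Memℓp (fun i : ℕ => if hi : i < d then z ⟨i, hi⟩ else 0) r := by
  refine Memℓp.of_exponent_ge (memℓp_zero ?_) zero_le
  apply Set.Finite.subset (Set.finite_Iio d)
  intro i hi
  simp only [Set.mem_setOf_eq] at hi
  by_contra hid
  exact hi (dif_neg (by simpa using hid))

/-- The readout linear map `C`. -/
noncomputable def convCL (d : ℕ) (q : ℝ≥0∞) [Fact (1 ≤ q)] :
    EuclideanSpace ℝ (Fin d) →ₗ[ℝ] lp (fun _ : ℕ => ℝ) q where
  toFun z := ⟨fun i => if hi : i < d then z ⟨i, hi⟩ else 0, memℓp_finsupport q z⟩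
  map_add' x y := by
    apply lp.ext
    funext i
    simp only [lp.coeFn_add, Pi.add_apply]
    split_ifs <;> simp [PiLp.add_apply]
  map_smul' c x := by
    apply lp.ext
    funext i
    simp only [lp.coeFn_smul, Pi.smul_apply, RingHom.id_apply, smul_eq_mul]
    split_ifs <;> simp [PiLp.smul_apply, smul_eq_mul]

lemma lp_norm_one_eq {E : ℕ → Type*} [∀ i, NormedAddCommGroup (E i)]
    (g : lp E 1) : ‖g‖ = ∑' i, ‖g i‖ := by
  have h := lp.norm_eq_tsum_rpow (p := 1) (by simp) g
  simpa using h

lemma lp_summable_one {E : ℕ → Type*} [∀ i, NormedAddCommGroup (E i)]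
    (g : lp E 1) : Summable fun i => ‖g i‖ := by
  have := (memℓp_gen_iff (p := 1) (by simp)).1 (lp.memℓp g)
  simpa using this

/-- Hölder's inequality on `lp`, covering the endpoint cases. -/
lemma lp_holder {E : ℕ → Type*} [∀ i, NormedAddCommGroup (E i)] {p q : ℝ≥0∞}
    (hpq : 1 / p + 1 / q = 1) (f : lp E p) (g : lp E q) :
    Summable (fun i => ‖f i‖ * ‖g i‖) ∧ ∑' i, ‖f i‖ * ‖g i‖ ≤ ‖f‖ * ‖g‖ := by
  have hc : p.HolderConjugate q := ⟨by simpa [one_div] using hpq⟩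
  rcases eq_or_ne p ∞ with hp | hp
  · subst hp
    have hq : q = 1 := by
      have h1 := (ENNReal.holderConjugate_iff.1 hc)
      simp only [ENNReal.inv_top, zero_add] at h1
      simpa using congrArg (·⁻¹) h1
    subst hq
    have hg := lp_summable_one g
    have hfb : ∀ i, ‖f i‖ * ‖g i‖ ≤ ‖f‖ * ‖g i‖ := fun i =>
      mul_le_mul_of_nonneg_right (lp.norm_apply_le_norm ENNReal.top_ne_zero f i) (norm_nonneg _)
    have hs : Summable fun i => ‖f i‖ * ‖g i‖ :=
      Summable.of_nonneg_of_le (fun i => by positivity) hfb (hg.mul_left ‖f‖)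
    refine ⟨hs, ?_⟩
    calc ∑' i, ‖f i‖ * ‖g i‖ ≤ ∑' i, ‖f‖ * ‖g i‖ :=
          Summable.tsum_le_tsum hfb hs (hg.mul_left ‖f‖)
      _ = ‖f‖ * ∑' i, ‖g i‖ := tsum_mul_left
      _ = ‖f‖ * ‖g‖ := by rw [lp_norm_one_eq]
  rcases eq_or_ne q ∞ with hq | hq
  · subst hq
    have hp1 : p = 1 := by
      have h1 := (ENNReal.holderConjugate_iff.1 hc)
      simp only [ENNReal.inv_top, add_zero] at h1
      simpa using congrArg (·⁻¹) h1
    subst hp1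
    have hf := lp_summable_one f
    have hfb : ∀ i, ‖f i‖ * ‖g i‖ ≤ ‖f i‖ * ‖g‖ := fun i =>
      mul_le_mul_of_nonneg_left (lp.norm_apply_le_norm ENNReal.top_ne_zero g i) (norm_nonneg _)
    have hs : Summable fun i => ‖f i‖ * ‖g i‖ :=
      Summable.of_nonneg_of_le (fun i => by positivity) hfb (hf.mul_right ‖g‖)
    refine ⟨hs, ?_⟩
    calc ∑' i, ‖f i‖ * ‖g i‖ ≤ ∑' i, ‖f i‖ * ‖g‖ :=
          Summable.tsum_le_tsum hfb hs (hf.mul_right ‖g‖)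
      _ = (∑' i, ‖f i‖) * ‖g‖ := tsum_mul_right
      _ = ‖f‖ * ‖g‖ := by rw [lp_norm_one_eq]
  · have hp1 : p ≠ 1 := by
      rintro rfl
      have h1 := (ENNReal.holderConjugate_iff.1 hc)
      simp only [inv_one] at h1
      have h0 : q⁻¹ = 0 := by
        by_contra hne
        have h2 : (1:ℝ≥0∞) < 1 + q⁻¹ := ENNReal.lt_add_right ENNReal.one_ne_top hne
        rw [h1] at h2
        exact lt_irrefl _ h2
      exact hq (by simpa using congrArg (·⁻¹) h0)
    have honelt : 1 < p.toReal := by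
      rw [← ENNReal.toReal_one]
      exact (ENNReal.toReal_lt_toReal ENNReal.one_ne_top hp).2
        (lt_of_le_of_ne (ENNReal.HolderConjugate.one_le p q) (Ne.symm hp1))
    have hconj : p.toReal.HolderConjugate q.toReal := by
      refine Real.holderConjugate_iff.2 ⟨honelt, ?_⟩
      have h2 := congrArg ENNReal.toReal (ENNReal.holderConjugate_iff.1 hc)
      rwa [ENNReal.toReal_add (by simp [ENNReal.HolderConjugate.ne_zero p q]) (by simp [ENNReal.HolderConjugate.ne_zero q p]),
        ENNReal.toReal_inv, ENNReal.toReal_inv, ENNReal.toReal_one] at h2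
    exact lp.tsum_mul_le_mul_norm hconj f g

lemma lp_norm_le_of_inj {r : ℝ≥0∞} [Fact (1 ≤ r)] (f g : lp (fun _ : ℕ => ℝ) r)
    (σ : ℕ → ℕ) (hσ : Function.Injective σ) (hfg : ∀ i, f i = g (σ i)) : ‖f‖ ≤ ‖g‖ := by
  rcases eq_or_ne r ∞ with hri | hri
  · subst hri
    refine lp.norm_le_of_forall_le (lp.norm_nonneg' g) fun i => ?_
    rw [hfg i]
    exact lp.norm_apply_le_norm ENNReal.top_ne_zero g (σ i)
  · have hr0 : 0 < r.toReal :=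
      ENNReal.toReal_pos (by have := Fact.out (p := 1 ≤ r); rintro rfl; simp_all) hri
    refine lp.norm_le_of_tsum_le hr0 (lp.norm_nonneg' g) ?_
    rw [lp.norm_rpow_eq_tsum hr0 g]
    refine Summable.tsum_le_tsum_of_inj σ hσ (fun c _ => Real.rpow_nonneg (norm_nonneg _) _)
      (fun i => by rw [hfg i]) ((memℓp_gen_iff hr0).1 (lp.memℓp f))
      ((memℓp_gen_iff hr0).1 (lp.memℓp g))

lemma convFlatten_block {d : ℕ} (hd : 0 < d) (w : ℕ → EuclideanSpace ℝ (Fin d))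
    (t k : ℕ) (j : Fin d) : convFlatten hd w t (d * k + j) = w (t + k) j := by
  unfold convFlatten
  have h1 : t + (d * k + (j : ℕ)) / d = t + k := by
    rw [Nat.mul_add_div hd, Nat.div_eq_of_lt j.isLt, add_zero]
  have h2 : (⟨(d * k + (j : ℕ)) % d, Nat.mod_lt _ hd⟩ : Fin d) = j :=
    Fin.ext (show (d * k + (j : ℕ)) % d = (j : ℕ) by
      rw [Nat.mul_add_mod, Nat.mod_eq_of_lt j.isLt])
  rw [h1, h2]

lemma convFlatten_zero_shift {d : ℕ} (hd : 0 < d) (w : ℕ → EuclideanSpace ℝ (Fin d))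
    (t i : ℕ) : convFlatten hd w 0 (d * t + i) = convFlatten hd w t i := by
  unfold convFlatten
  have h1 : 0 + (d * t + i) / d = t + i / d := by rw [Nat.mul_add_div hd]; omega
  have h2 : (⟨(d * t + i) % d, Nat.mod_lt _ hd⟩ : Fin d) = ⟨i % d, Nat.mod_lt _ hd⟩ :=
    Fin.ext (show (d * t + i) % d = i % d by rw [Nat.mul_add_mod])
  rw [h1, h2]

lemma convFlatten_lt {d : ℕ} (hd : 0 < d) (w : ℕ → EuclideanSpace ℝ (Fin d))
    (t i : ℕ) (hi : i < d) : convFlatten hd w t i = w t ⟨i, hi⟩ := by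
  unfold convFlatten
  have h1 : t + i / d = t := by rw [Nat.div_eq_of_lt hi]; omega
  have h2 : (⟨i % d, Nat.mod_lt _ hd⟩ : Fin d) = ⟨i, hi⟩ :=
    Fin.ext (show i % d = i from Nat.mod_eq_of_lt hi)
  rw [h1, h2]

lemma convFlatten_ge {d : ℕ} (hd : 0 < d) (w : ℕ → EuclideanSpace ℝ (Fin d))
    (t i : ℕ) (hi : d ≤ i) : convFlatten hd w t i = convFlatten hd w (t + 1) (i - d) := by
  unfold convFlatten
  have h1 : t + i / d = t + 1 + (i - d) / d := by rw [Nat.div_eq_sub_div hd hi]; ring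
  have h2 : (⟨i % d, Nat.mod_lt _ hd⟩ : Fin d) = ⟨(i - d) % d, Nat.mod_lt _ hd⟩ :=
    Fin.ext (show i % d = (i - d) % d from Nat.mod_eq_sub_mod hi)
  rw [h1, h2]

/-- **Convolutional functionals are recurrent Barron functionals.**  For
`h ∈ ℓ^p_-(ℝ^d)` and inputs in `ℓ^q_-(D_d)` (reversed indexing: `h i = h_{-i}`,
`z i = z_{-i}`), the series `H(z) = ∑_{i} h_{-i} ⬝ z_{-i}` converges absolutely
with `∑_i |h_{-i} ⬝ z_{-i}| ≤ ‖h‖_p ‖z‖_q` (Hölder), and `H ∈ 𝒞` with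
`σ₁(x) = x` and `σ₂(x) = x`. -/
theorem convolutional_functional_isRecurrentBarron
    (p q : ℝ≥0∞) [Fact (1 ≤ p)] [Fact (1 ≤ q)]
    (hpq : 1 / p + 1 / q = 1)
    [MeasurableSpace (lp (fun _ : ℕ => ℝ) p)] [BorelSpace (lp (fun _ : ℕ => ℝ) p)]
    (d : ℕ) (h : ℕ → EuclideanSpace ℝ (Fin d)) (hh : Memℓp h p)
    (I : Set (ℕ → EuclideanSpace ℝ (Fin d)))
    (hI : ∀ z ∈ I, Memℓp z q) :
    (∀ z (hz : Memℓp z q), z ∈ I →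
      Summable (fun i => |∑ j, h i j * z i j|) ∧
      ∑' i, |∑ j, h i j * z i j| ≤
        ‖(⟨h, hh⟩ : lp (fun _ : ℕ => EuclideanSpace ℝ (Fin d)) p)‖ *
        ‖(⟨z, hz⟩ : lp (fun _ : ℕ => EuclideanSpace ℝ (Fin d)) q)‖) ∧
    IsRecurrentBarron p q (fun x => x) (fun x => x) d I
      (fun z => ∑' i, ∑ j, h i j * z i j) := by
  classical
  have hq1 : (1:ℝ≥0∞) ≤ q := Fact.out
  have hp1 : (1:ℝ≥0∞) ≤ p := Fact.out
  have hmsc1 : MeasurableSingletonClass (lp (fun _ : ℕ => ℝ) p) :=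
    OpensMeasurableSpace.toMeasurableSingletonClass
  have hmsc : MeasurableSingletonClass
      (ℝ × lp (fun _ : ℕ => ℝ) p × EuclideanSpace ℝ (Fin d) × ℝ) :=
    Prod.instMeasurableSingletonClass
  -- Part 1: Hölder
  have part1 : ∀ (z : ℕ → EuclideanSpace ℝ (Fin d)) (hz : Memℓp z q),
      Summable (fun i => |∑ j, h i j * z i j|) ∧
      ∑' i, |∑ j, h i j * z i j| ≤
        ‖(⟨h, hh⟩ : lp (fun _ : ℕ => EuclideanSpace ℝ (Fin d)) p)‖ *
        ‖(⟨z, hz⟩ : lp (fun _ : ℕ => EuclideanSpace ℝ (Fin d)) q)‖ := by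
    intro z hz
    obtain ⟨hs, hle⟩ := lp_holder hpq (⟨h, hh⟩ : lp (fun _ : ℕ => EuclideanSpace ℝ (Fin d)) p)
      (⟨z, hz⟩ : lp (fun _ : ℕ => EuclideanSpace ℝ (Fin d)) q)
    have hb : ∀ i, |∑ j, h i j * z i j| ≤ ‖h i‖ * ‖z i‖ := fun i => euclid_dot_le (h i) (z i)
    have hsum : Summable fun i => |∑ j, h i j * z i j| :=
      Summable.of_nonneg_of_le (fun i => abs_nonneg _) hb hs
    exact ⟨hsum, le_trans (Summable.tsum_le_tsum hb hsum hs) hle⟩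
  refine ⟨fun z hz _ => part1 z hz, ?_⟩
  rcases Nat.eq_zero_or_pos d with hd0 | hd
  · -- degenerate case `d = 0`
    subst hd0
    refine ⟨Measure.dirac (0, 0, 0, 0), inferInstance, 0, 0, 0, fun _ _ => 0, ?_, ?_, ?_⟩
    · exact (integrable_const _).congr (ae_eq_dirac _).symm
    · intro z hz
      refine ⟨⟨0, fun t => by simp⟩, fun t i => by simp, ?_⟩
      intro y _ hy
      funext t
      apply lp.ext
      funext i
      simpa using hy t i
    · intro z hz
      rw [integral_dirac]
      simp
  · -- main case `0 < d`
    set a : lp (fun _ : ℕ => ℝ) p := ⟨convFlatten hd h 1, memℓp_convFlatten hd hh hp1 1⟩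
    refine ⟨Measure.dirac ((1:ℝ), a, h 0, (0:ℝ)), inferInstance,
      convShiftL d q, convCL d q, 0,
      fun z => if hz : Memℓp z q then
        (fun t => ⟨convFlatten hd z t, memℓp_convFlatten hd hz hq1 t⟩) else fun _ => 0,
      ?_, ?_, ?_⟩
    · exact (integrable_const _).congr (ae_eq_dirac _).symm
    · intro z hzI
      have hz := hI z hzI
      simp only [dif_pos hz]
      refine ⟨⟨‖(⟨convFlatten hd z 0, memℓp_convFlatten hd hz hq1 0⟩ :
          lp (fun _ : ℕ => ℝ) q)‖, fun t => ?_⟩, fun t i => ?_, ?_⟩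
      · -- uniform bound
        refine lp_norm_le_of_inj _ _ (fun i => d * t + i) (add_right_injective (d * t))
          (fun i => (convFlatten_zero_shift hd z t i).symm)
      · -- state equation
        show convFlatten hd z t i = _
        simp only [lp.coeFn_add, Pi.add_apply]
        have hA : (convShiftL d q
            (⟨convFlatten hd z (t+1), memℓp_convFlatten hd hz hq1 (t+1)⟩ :
              lp (fun _ : ℕ => ℝ) q) : ∀ _ : ℕ, ℝ) i
            = if d ≤ i then convFlatten hd z (t+1) (i - d) else 0 := rfl
        have hC : (convCL d q (z t) : ∀ _ : ℕ, ℝ) i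
            = if hi : i < d then z t ⟨i, hi⟩ else 0 := rfl
        rw [hA, hC]
        rcases lt_or_ge i d with hi | hi
        · rw [if_neg (by omega), dif_pos hi, convFlatten_lt hd z t i hi]
          simp
        · rw [if_pos hi, dif_neg (by omega), convFlatten_ge hd z t i hi]
          simp
      · -- uniqueness
        intro y _ hy
        have key : ∀ i t, (y t : ∀ _ : ℕ, ℝ) i = convFlatten hd z t i := by
          intro i
          induction i using Nat.strong_induction_on with
          | _ i ih =>
            intro t
            have h0 := hy t i
            simp only [lp.coeFn_add, Pi.add_apply] at h0
            have hA : (convShiftL d q (y (t+1)) : ∀ _ : ℕ, ℝ) i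
                = if d ≤ i then (y (t+1) : ∀ _ : ℕ, ℝ) (i - d) else 0 := rfl
            have hC : (convCL d q (z t) : ∀ _ : ℕ, ℝ) i
                = if hi : i < d then z t ⟨i, hi⟩ else 0 := rfl
            rw [hA, hC] at h0
            rcases lt_or_ge i d with hi | hi
            · rw [if_neg (by omega), dif_pos hi] at h0
              rw [convFlatten_lt hd z t i hi]
              simpa using h0
            · rw [if_pos hi, dif_neg (by omega)] at h0
              have hlt : i - d < i := by omega
              have hih := ih (i - d) hlt (t + 1)
              rw [convFlatten_ge hd z t i hi, ← hih]
              simpa using h0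
        funext t
        apply lp.ext
        funext i
        exact key i t
    · -- representation
      intro z hzI
      have hz := hI z hzI
      rw [integral_dirac]
      simp only [dif_pos hz, one_mul]
      set X : lp (fun _ : ℕ => ℝ) q := ⟨convFlatten hd z 1, memℓp_convFlatten hd hz hq1 1⟩
      -- summability of the full series
      have hsumfull : Summable fun i => ∑ j, h i j * z i j :=
        summable_abs_iff.1 (part1 z hz).1
      -- the inner product series
      have haX : Summable fun i => |(a : ∀ _ : ℕ, ℝ) i * (X : ∀ _ : ℕ, ℝ) i| := by
        refine ((lp_holder hpq a X).1).congr fun i => ?_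
        rw [Real.norm_eq_abs, Real.norm_eq_abs, ← abs_mul]
      have haX' : Summable fun i => (a : ∀ _ : ℕ, ℝ) i * (X : ∀ _ : ℕ, ℝ) i := haX.of_abs
      -- identify with the product-indexed series
      have hcomp : ∀ kj : ℕ × Fin d,
          (a : ∀ _ : ℕ, ℝ) ((convEquiv d hd).symm kj) *
            (X : ∀ _ : ℕ, ℝ) ((convEquiv d hd).symm kj)
          = h (1 + kj.1) kj.2 * z (1 + kj.1) kj.2 := by
        rintro ⟨k, j⟩
        show convFlatten hd h 1 (d * k + j) * convFlatten hd z 1 (d * k + j) = _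
        rw [convFlatten_block hd h 1 k j, convFlatten_block hd z 1 k j]
      have hF : Summable fun kj : ℕ × Fin d => h (1 + kj.1) kj.2 * z (1 + kj.1) kj.2 := by
        refine (haX'.comp_injective (convEquiv d hd).symm.injective).congr fun kj => ?_
        exact hcomp kj
      have htsum1 : (∑' i, (a : ∀ _ : ℕ, ℝ) i * (X : ∀ _ : ℕ, ℝ) i)
          = ∑' kj : ℕ × Fin d, h (1 + kj.1) kj.2 * z (1 + kj.1) kj.2 := by
        rw [← (convEquiv d hd).symm.tsum_eq]
        exact tsum_congr hcomp
      have htsum2 : (∑' kj : ℕ × Fin d, h (1 + kj.1) kj.2 * z (1 + kj.1) kj.2)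
          = ∑' k, ∑ j, h (1 + k) j * z (1 + k) j := by
        rw [Summable.tsum_prod' hF fun k => Summable.of_finite]
        exact tsum_congr fun k => tsum_fintype _
      rw [htsum1, htsum2]
      rw [Summable.tsum_eq_zero_add hsumfull]
      have : ∀ k : ℕ, (∑ j, h (1 + k) j * z (1 + k) j) = ∑ j, h (k + 1) j * z (k + 1) j := by
        intro k; rw [add_comm]
      rw [tsum_congr this]
      ring
end

section
/- Let $\sigma_1(x)=x$, let $A:\ell^q\to\ell^q$, $C:\mathbb{R}^d\to\ell^q$ be bounded linear with $L_{\sigma_1}\|A\|_{op}<1$ (here $=\|A\|_{op}<1$), ${\bf B}\in\ell^q$, $q\in[1,\infty)$. Let $(\bar A,\bar{\bf B},\bar C)$ be the $N$-dimensional truncations $\bar A_{ij}=(A\epsilon^j)_i$, $\bar B_i=B_i$, $\bar C_{ik}=(C e^k)_i$ for $i,j\leq N$, $k\leq d$. If $(\mathbf{x}_t)$ and $(\mathbf{x}^N_t)$ are the unique bounded solutions of the full system $\mathbf{x}_t=\sigma_1(A\mathbf{x}_{t-1}+C{\bf z}_t+{\bf B})$ and truncated system $\mathbf{x}^N_t=\sigma_1(\bar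 A\mathbf{x}^N_{t-1}+\bar C{\bf z}_t+\bar{\bf B})$ respectively, then for all $t\in\mathbb{Z}_-$, $\|\mathbf{x}_t-\iota(\mathbf{x}^N_t)\|_q\leq\sum_{k=0}^\infty(L_{\sigma_1}\|A\|_{op})^k\big(\sum_{i=N+1}^\infty|x_{t-k,i}|^q\big)^{1/q}$, where $\iota:\mathbb{R}^N\to\ell^q$ is extension by zero. -/
open scoped ENNReal NNReal

private lemma iter_geom_bound (e tl : ℕ → ℝ) (r M : ℝ) (hr0 : 0 ≤ r) (hr1 : r < 1)
    (htail0 : ∀ t, 0 ≤ tl t) (heM : ∀ t, e t ≤ M)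
    (hstep : ∀ t, e t ≤ tl t + r * e (t + 1))
    (hsum : ∀ t, Summable (fun k => r ^ k * tl (t + k)))
    (t : ℕ) : e t ≤ ∑' k, r ^ k * tl (t + k) := by
  have key : ∀ n t, e t ≤ (∑ k ∈ Finset.range n, r ^ k * tl (t + k)) + r ^ n * M := by
    intro n
    induction n with
    | zero => intro t; simpa using heM t
    | succ n ih =>
      intro t
      calc e t ≤ tl t + r * e (t + 1) := hstep t
        _ ≤ tl t + r * ((∑ k ∈ Finset.range n, r ^ k * tl (t + 1 + k)) + r ^ n * M) := by
            have := ih (t + 1)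
            nlinarith [mul_le_mul_of_nonneg_left this hr0]
        _ = (∑ k ∈ Finset.range (n + 1), r ^ k * tl (t + k)) + r ^ (n + 1) * M := by
            rw [Finset.sum_range_succ']
            have hcong : ∀ k ∈ Finset.range n,
                r ^ (k + 1) * tl (t + (k + 1)) = r * (r ^ k * tl (t + 1 + k)) := by
              intro k _
              rw [show t + (k + 1) = t + 1 + k by omega]
              ring
            rw [Finset.sum_congr rfl hcong, ← Finset.mul_sum]
            simp only [pow_zero, one_mul, add_zero]
            ring
  have h1 : Filter.Tendsto (fun n => ∑ k ∈ Finset.range n, r ^ k * tl (t + k))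
      Filter.atTop (nhds (∑' k, r ^ k * tl (t + k))) := (hsum t).hasSum.tendsto_sum_nat
  have h2 : Filter.Tendsto (fun n : ℕ => r ^ n * M) Filter.atTop (nhds 0) := by
    simpa using (tendsto_pow_atTop_nhds_zero_of_lt_one hr0 hr1).mul_const M
  have := ge_of_tendsto' (h1.add h2) (fun n => key n t)
  simpa using this

/-- **State error of the finite-dimensional truncation.**  Reversed time
indexing: `x t` (resp. `xN t`) is the state of the full (resp. truncated) system
at time `-t`, and `z t` the input at time `-t`.  The truncated system uses
`Ā_{ij} = (A ε^j)_i`, `B̄_i = B_i`, `C̄_{ik} = (C e^k)_i` for `i, j < N`, `k < d`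
(0-based).  The conclusion is the bound (possibly with infinite right-hand side,
hence stated in `ℝ≥0∞`)
`‖x t - ι(xN t)‖_q ≤ ∑_{k≥0} (L ‖A‖)^k (∑_{i ≥ N} |x_{t-k,i}|^q)^{1/q}`. -/
theorem truncation_state_bound
    (q : ℝ≥0∞) [Fact (1 ≤ q)] (hq : q ≠ ∞) (d N : ℕ)
    (σ1 : ℝ → ℝ) (L : ℝ≥0) (hσLip : LipschitzWith L σ1) (hσ0 : σ1 0 = 0)
    (A : lp (fun _ : ℕ => ℝ) q →L[ℝ] lp (fun _ : ℕ => ℝ) q)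
    (hA : (L : ℝ) * ‖A‖ < 1)
    (C : EuclideanSpace ℝ (Fin d) →L[ℝ] lp (fun _ : ℕ => ℝ) q)
    (B : lp (fun _ : ℕ => ℝ) q)
    (z : ℕ → EuclideanSpace ℝ (Fin d))
    (x : ℕ → lp (fun _ : ℕ => ℝ) q) (Mx : ℝ) (hxb : ∀ t, ‖x t‖ ≤ Mx)
    (hx : ∀ t i, (x t : ∀ _ : ℕ, ℝ) i
      = σ1 ((A (x (t + 1)) + C (z t) + B : lp (fun _ : ℕ => ℝ) q) i))
    (xN : ℕ → EuclideanSpace ℝ (Fin N)) (MxN : ℝ) (hxNb : ∀ t, ‖xN t‖ ≤ MxN)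
    (hxN : ∀ t (i : Fin N), xN t i
      = σ1 ((∑ j : Fin N, (A (lp.single q (j : ℕ) 1) : ∀ _ : ℕ, ℝ) (i : ℕ) * xN (t + 1) j)
          + (C (z t) : ∀ _ : ℕ, ℝ) (i : ℕ) + (B : ∀ _ : ℕ, ℝ) (i : ℕ))) :
    ∀ t, ENNReal.ofReal
        ‖x t - ∑ j : Fin N, lp.single q (j : ℕ) (xN t j)‖
      ≤ ∑' k : ℕ, ENNReal.ofReal (((L : ℝ) * ‖A‖) ^ k *
          (∑' i : ℕ, |(x (t + k) : ∀ _ : ℕ, ℝ) (i + N)| ^ q.toReal) ^ (1 / q.toReal)) := by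
  classical
  have hq1 : (1 : ℝ≥0∞) ≤ q := Fact.out
  have hqt1 : 1 ≤ q.toReal := by simpa using ENNReal.toReal_mono hq hq1
  have hqt0 : 0 < q.toReal := lt_of_lt_of_le one_pos hqt1
  set p : ℝ := q.toReal with hp
  -- the embedding ι
  set ι : EuclideanSpace ℝ (Fin N) → lp (fun _ : ℕ => ℝ) q :=
    fun v => ∑ j : Fin N, lp.single q (j : ℕ) (v j) with hι
  have hιcoe : ∀ (v : EuclideanSpace ℝ (Fin N)) (i : ℕ),
      (ι v : ∀ _ : ℕ, ℝ) i = if h : i < N then v ⟨i, h⟩ else 0 := by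
    intro v i
    simp only [hι, lp.coeFn_sum, Finset.sum_apply]
    by_cases h : i < N
    · rw [dif_pos h, Finset.sum_eq_single (⟨i, h⟩ : Fin N)]
      · simp [lp.single_apply]
      · intro j _ hj
        exact lp.single_apply_ne q _ _ (fun e => hj (Fin.ext e.symm))
      · simp
    · rw [dif_neg h]
      exact Finset.sum_eq_zero fun j _ =>
        lp.single_apply_ne q _ _ (fun e => h (e ▸ j.isLt))
  -- A applied to ι v, coefficientwise
  have hAι : ∀ (v : EuclideanSpace ℝ (Fin N)) (i : ℕ),
      (A (ι v) : ∀ _ : ℕ, ℝ) i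
        = ∑ j : Fin N, (A (lp.single q (j : ℕ) 1) : ∀ _ : ℕ, ℝ) i * v j := by
    intro v i
    have h1 : A (ι v) = ∑ j : Fin N, v j • A (lp.single q (j : ℕ) (1 : ℝ)) := by
      simp only [hι]
      have h2 : ∀ j : Fin N, (lp.single q (j : ℕ) (v j) : lp (fun _ : ℕ => ℝ) q)
          = v j • (lp.single q (j : ℕ) (1 : ℝ) : lp (fun _ : ℕ => ℝ) q) := fun j => by
        have h3 := lp.single_smul (E := fun _ : ℕ => ℝ) (𝕜 := ℝ) q (j : ℕ) (v j) (1 : ℝ)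
        simpa using h3
      rw [Finset.sum_congr rfl (fun j _ => h2 j), map_sum]
      exact Finset.sum_congr rfl fun j _ => by rw [map_smul]
    rw [h1]
    simp only [lp.coeFn_sum, Finset.sum_apply, lp.coeFn_smul, Pi.smul_apply,
      smul_eq_mul]
    exact Finset.sum_congr rfl fun j _ => mul_comm _ _
  -- error sequence and tail
  set D : ℕ → lp (fun _ : ℕ => ℝ) q := fun t => x t - ι (xN t) with hD
  set tl : ℕ → ℝ :=
    fun t => (∑' i : ℕ, |(x t : ∀ _ : ℕ, ℝ) (i + N)| ^ p) ^ (1 / p) with htl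
  have hDcoe : ∀ t i, (D t : ∀ _ : ℕ, ℝ) i
      = (x t : ∀ _ : ℕ, ℝ) i - (ι (xN t) : ∀ _ : ℕ, ℝ) i := by
    intro t i; simp only [hD]; simp [lp.coeFn_sub]
  -- pointwise Lipschitz estimate for i < N
  have hpt : ∀ t (i : Fin N),
      |(D t : ∀ _ : ℕ, ℝ) (i : ℕ)| ≤ (L : ℝ) * |(A (D (t + 1)) : ∀ _ : ℕ, ℝ) (i : ℕ)| := by
    intro t i
    have hcoe : (ι (xN t) : ∀ _ : ℕ, ℝ) (i : ℕ) = xN t i := by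
      rw [hιcoe]; simp [i.isLt]
    rw [hDcoe, hcoe, hx t i, hxN t i]
    have hlip := hσLip.dist_le_mul
      ((A (x (t + 1)) + C (z t) + B : lp (fun _ : ℕ => ℝ) q) (i : ℕ))
      ((∑ j : Fin N, (A (lp.single q (j : ℕ) 1) : ∀ _ : ℕ, ℝ) (i : ℕ) * xN (t + 1) j)
          + (C (z t) : ∀ _ : ℕ, ℝ) (i : ℕ) + (B : ∀ _ : ℕ, ℝ) (i : ℕ))
    rw [Real.dist_eq, Real.dist_eq] at hlip
    refine hlip.trans (le_of_eq ?_)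
    have hAD : (A (D (t + 1)) : ∀ _ : ℕ, ℝ) (i : ℕ)
        = (A (x (t + 1)) : ∀ _ : ℕ, ℝ) (i : ℕ) - (A (ι (xN (t + 1))) : ∀ _ : ℕ, ℝ) (i : ℕ) := by
      simp only [hD]
      rw [map_sub]
      simp [lp.coeFn_sub]
    have harg : ((A (x (t + 1)) + C (z t) + B : lp (fun _ : ℕ => ℝ) q) (i : ℕ))
        - ((∑ j : Fin N, (A (lp.single q (j : ℕ) 1) : ∀ _ : ℕ, ℝ) (i : ℕ) * xN (t + 1) j)
          + (C (z t) : ∀ _ : ℕ, ℝ) (i : ℕ) + (B : ∀ _ : ℕ, ℝ) (i : ℕ))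
        = (A (D (t + 1)) : ∀ _ : ℕ, ℝ) (i : ℕ) := by
      rw [hAD, hAι]
      simp only [lp.coeFn_add, Pi.add_apply]
      ring
    rw [harg]
  -- for i ≥ N, D t agrees with x t
  have hpt2 : ∀ t (i : ℕ), (D t : ∀ _ : ℕ, ℝ) (i + N) = (x t : ∀ _ : ℕ, ℝ) (i + N) := by
    intro t i
    rw [hDcoe, hιcoe]
    simp
  -- summability of |D t ·|^p etc.
  have hsumD : ∀ t, Summable fun i => ‖(D t : ∀ _ : ℕ, ℝ) i‖ ^ p :=
    fun t => (lp.memℓp (D t)).summable hqt0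
  have htail_nonneg : ∀ t, 0 ≤ tl t := fun t => Real.rpow_nonneg
    (tsum_nonneg fun i => Real.rpow_nonneg (abs_nonneg _) p) _
  -- tail is bounded by ‖x t‖ ≤ Mx
  have hMx0 : 0 ≤ Mx := (norm_nonneg _).trans (hxb 0)
  have htailMx : ∀ t, tl t ≤ Mx := by
    intro t
    have hsx : Summable fun i => ‖(x t : ∀ _ : ℕ, ℝ) i‖ ^ p :=
      (lp.memℓp (x t)).summable hqt0
    have h1 : ∑' i : ℕ, |(x t : ∀ _ : ℕ, ℝ) (i + N)| ^ p
        ≤ ∑' i : ℕ, ‖(x t : ∀ _ : ℕ, ℝ) i‖ ^ p := by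
      rw [← Summable.sum_add_tsum_nat_add N hsx]
      have heq : (fun i : ℕ => |(x t : ∀ _ : ℕ, ℝ) (i + N)| ^ p)
          = fun i : ℕ => ‖(x t : ∀ _ : ℕ, ℝ) (i + N)‖ ^ p := by
        funext i; rw [Real.norm_eq_abs]
      rw [heq]
      exact le_add_of_nonneg_left (Finset.sum_nonneg fun i _ =>
        Real.rpow_nonneg (norm_nonneg _) p)
    have h2 : ∑' i : ℕ, ‖(x t : ∀ _ : ℕ, ℝ) i‖ ^ p = ‖x t‖ ^ p :=
      (lp.norm_rpow_eq_tsum hqt0 (x t)).symm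
    calc tl t ≤ (‖x t‖ ^ p) ^ (1 / p) := by
          simp only [htl]
          exact Real.rpow_le_rpow (tsum_nonneg fun i => Real.rpow_nonneg (abs_nonneg _) p)
            (h1.trans h2.le) (by positivity)
      _ = ‖x t‖ := by
          rw [one_div, Real.rpow_rpow_inv (norm_nonneg _) hqt0.ne']
      _ ≤ Mx := hxb t
  -- bound on ‖D t‖
  have hDM : ∀ t, ‖D t‖ ≤ Mx + N * MxN := by
    intro t
    have hcomp : ∀ j : Fin N, |xN t j| ≤ MxN := by
      intro j
      refine le_trans ?_ (hxNb t)
      rw [EuclideanSpace.norm_eq]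
      have h1 : |xN t j| = Real.sqrt (‖xN t j‖ ^ 2) := by
        rw [Real.sqrt_sq_eq_abs, Real.norm_eq_abs, abs_abs]
      rw [h1]
      exact Real.sqrt_le_sqrt (Finset.single_le_sum
        (fun i _ => sq_nonneg ‖xN t i‖) (Finset.mem_univ j))
    have hsing : ∀ j : Fin N,
        ‖(lp.single q (j : ℕ) (xN t j) : lp (fun _ : ℕ => ℝ) q)‖ ≤ MxN := by
      intro j
      have h5 : ‖(lp.single q (j : ℕ) (xN t j) : lp (fun _ : ℕ => ℝ) q)‖ = ‖xN t j‖ := by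
        simpa using lp.norm_single (E := fun _ : ℕ => ℝ) (zero_lt_one.trans_le hq1) (j : ℕ) (xN t j)
      rw [h5, Real.norm_eq_abs]
      exact hcomp j
    have hιnorm : ‖ι (xN t)‖ ≤ N * MxN := by
      simp only [hι]
      refine (norm_sum_le _ _).trans ?_
      calc ∑ j : Fin N, ‖(lp.single q (j : ℕ) (xN t j) : lp (fun _ : ℕ => ℝ) q)‖
          ≤ ∑ _j : Fin N, MxN := Finset.sum_le_sum fun j _ => hsing j
        _ = N * MxN := by simp [mul_comm]
    calc ‖D t‖ ≤ ‖x t‖ + ‖ι (xN t)‖ := by simp only [hD]; exact norm_sub_le _ _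
      _ ≤ Mx + N * MxN := add_le_add (hxb t) hιnorm
  -- the one-step estimate
  set r : ℝ := (L : ℝ) * ‖A‖ with hr
  have hr0 : 0 ≤ r := mul_nonneg L.coe_nonneg (norm_nonneg _)
  have hstep : ∀ t, ‖D t‖ ≤ tl t + r * ‖D (t + 1)‖ := by
    intro t
    have hADsum : Summable fun i => ‖(A (D (t + 1)) : ∀ _ : ℕ, ℝ) i‖ ^ p :=
      (lp.memℓp (A (D (t + 1)))).summable hqt0
    -- head estimate
    have hhead : ∑ i ∈ Finset.range N, ‖(D t : ∀ _ : ℕ, ℝ) i‖ ^ p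
        ≤ ((L : ℝ) * ‖A (D (t + 1))‖) ^ p := by
      have h1 : ∑ i ∈ Finset.range N, ‖(D t : ∀ _ : ℕ, ℝ) i‖ ^ p
          ≤ ∑ i ∈ Finset.range N, ((L : ℝ) * ‖(A (D (t + 1)) : ∀ _ : ℕ, ℝ) i‖) ^ p := by
        refine Finset.sum_le_sum fun i hi => ?_
        have hi' : i < N := Finset.mem_range.1 hi
        refine Real.rpow_le_rpow (norm_nonneg _) ?_ hqt0.le
        have := hpt t ⟨i, hi'⟩
        simpa [Real.norm_eq_abs] using this
      have heq : (fun i : ℕ => ((L : ℝ) * ‖(A (D (t + 1)) : ∀ _ : ℕ, ℝ) i‖) ^ p)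
          = fun i : ℕ => (L : ℝ) ^ p * ‖(A (D (t + 1)) : ∀ _ : ℕ, ℝ) i‖ ^ p := by
        funext i
        rw [Real.mul_rpow L.coe_nonneg (norm_nonneg _)]
      have h2 : ∑ i ∈ Finset.range N, ((L : ℝ) * ‖(A (D (t + 1)) : ∀ _ : ℕ, ℝ) i‖) ^ p
          ≤ ∑' i : ℕ, ((L : ℝ) * ‖(A (D (t + 1)) : ∀ _ : ℕ, ℝ) i‖) ^ p := by
        refine Summable.sum_le_tsum _ (fun i _ => Real.rpow_nonneg
          (mul_nonneg L.coe_nonneg (norm_nonneg _)) p) ?_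
        rw [heq]
        exact hADsum.mul_left _
      have h3 : ∑' i : ℕ, ((L : ℝ) * ‖(A (D (t + 1)) : ∀ _ : ℕ, ℝ) i‖) ^ p
          = ((L : ℝ) * ‖A (D (t + 1))‖) ^ p := by
        rw [heq, tsum_mul_left, ← lp.norm_rpow_eq_tsum hqt0,
          ← Real.mul_rpow L.coe_nonneg (norm_nonneg _)]
      exact h1.trans (h2.trans h3.le)
    -- tail part
    have htail_eq : ∑' i : ℕ, ‖(D t : ∀ _ : ℕ, ℝ) (i + N)‖ ^ p = tl t ^ p := by
      have h1 : (fun i : ℕ => ‖(D t : ∀ _ : ℕ, ℝ) (i + N)‖ ^ p)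
          = fun i : ℕ => |(x t : ∀ _ : ℕ, ℝ) (i + N)| ^ p := by
        funext i
        rw [hpt2 t i, Real.norm_eq_abs]
      rw [h1]
      simp only [htl]
      rw [one_div, Real.rpow_inv_rpow (tsum_nonneg fun i =>
        Real.rpow_nonneg (abs_nonneg _) p) hqt0.ne']
    -- combine
    have hsplit : ‖D t‖ ^ p ≤ ((L : ℝ) * ‖A (D (t + 1))‖) ^ p + tl t ^ p := by
      rw [lp.norm_rpow_eq_tsum hqt0, ← hp, ← Summable.sum_add_tsum_nat_add N (hsumD t), htail_eq]
      exact add_le_add hhead le_rfl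
    have hadd : ((L : ℝ) * ‖A (D (t + 1))‖) ^ p + tl t ^ p
        ≤ ((L : ℝ) * ‖A (D (t + 1))‖ + tl t) ^ p := by
      have ha : 0 ≤ (L : ℝ) * ‖A (D (t + 1))‖ := mul_nonneg L.coe_nonneg (norm_nonneg _)
      have h6 := NNReal.add_rpow_le_rpow_add
        (⟨_, ha⟩ : ℝ≥0) (⟨_, htail_nonneg t⟩ : ℝ≥0) hqt1
      have hcast := NNReal.coe_le_coe.2 h6
      push_cast [NNReal.coe_rpow] at hcast
      exact hcast
    have hDle : ‖D t‖ ≤ (L : ℝ) * ‖A (D (t + 1))‖ + tl t := by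
      have h4 : ‖D t‖ ^ p ≤ ((L : ℝ) * ‖A (D (t + 1))‖ + tl t) ^ p := hsplit.trans hadd
      exact (Real.rpow_le_rpow_iff (norm_nonneg _)
        (add_nonneg (mul_nonneg L.coe_nonneg (norm_nonneg _)) (htail_nonneg t)) hqt0).1 h4
    have hAop : (L : ℝ) * ‖A (D (t + 1))‖ ≤ r * ‖D (t + 1)‖ := by
      rw [hr, mul_assoc]
      exact mul_le_mul_of_nonneg_left (A.le_opNorm _) L.coe_nonneg
    calc ‖D t‖ ≤ (L : ℝ) * ‖A (D (t + 1))‖ + tl t := hDle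
      _ ≤ r * ‖D (t + 1)‖ + tl t := add_le_add_left hAop _
      _ = tl t + r * ‖D (t + 1)‖ := add_comm _ _
  -- summability of the geometric-tail series
  have hsumgeo : ∀ t, Summable fun k : ℕ => r ^ k * tl (t + k) := by
    intro t
    refine Summable.of_nonneg_of_le
      (fun k => mul_nonneg (pow_nonneg hr0 k) (htail_nonneg (t + k)))
      (fun k => ?_) ((summable_geometric_of_lt_one hr0 hA).mul_right Mx)
    exact mul_le_mul_of_nonneg_left (htailMx (t + k)) (pow_nonneg hr0 k)
  -- apply the iteration lemma
  intro t
  have hmain : ‖D t‖ ≤ ∑' k : ℕ, r ^ k * tl (t + k) :=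
    iter_geom_bound (fun t => ‖D t‖) tl r (Mx + N * MxN) hr0 hA htail_nonneg
      hDM hstep hsumgeo t
  have hgoal1 : ENNReal.ofReal ‖D t‖ ≤ ENNReal.ofReal (∑' k : ℕ, r ^ k * tl (t + k)) :=
    ENNReal.ofReal_le_ofReal hmain
  rw [ENNReal.ofReal_tsum_of_nonneg
    (fun k => mul_nonneg (pow_nonneg hr0 k) (htail_nonneg (t + k))) (hsumgeo t)] at hgoal1
  exact hgoal1
end
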